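/- arXiv:2504.19497 — 4 statements merged into one kernel-verified Lean document; each statement's English description precedes it below -/
import Mathlib

section
/- If G : ℝ^n → ℝ^n is μ-inverse Lipschitz with μ > 0, then the function H(x) = (1/2)|G(x)|² + c (c a constant) satisfies the Polyak-Łojasiewicz inequality (1/2)|∇H(x)|² ≥ μ²(H(x) - min_x H(x)) at every point x where G is differentiable and H attains its minimum. -/
/-!
Where `G` is differentiable with derivative `A`, the gradient of `H = ½‖G‖² + c` is `A† (G x)`.
Inverse Lipschitz continuity passes to the derivative, `μ‖v‖ ≤ ‖A v‖`, so in finite dimension `A`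
is invertible, and then `‖G x‖² = ⟪A† (G x), A⁻¹ (G x)⟫ ≤ ‖A† (G x)‖ ‖G x‖ / μ`. Hence
`½‖∇H x‖² ≥ ½ μ² ‖G x‖² = μ² (H x - c) ≥ μ² (H x - H x₀)`, since `H ≥ c`.
-/

section Derivative

variable {E F : Type*} [NormedAddCommGroup E] [NormedSpace ℝ E]
  [NormedAddCommGroup F] [NormedSpace ℝ F]

theorem HasFDerivAt.mul_norm_le_norm_apply_of_forall_mul_norm_sub_le {f : E → F}
    {f' : E →L[ℝ] F} {x : E} {μ : ℝ} (hf : ∀ a b, μ * ‖a - b‖ ≤ ‖f a - f b‖)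
    (hf' : HasFDerivAt f f' x) (v : E) : μ * ‖v‖ ≤ ‖f' v‖ := by
  have hline : HasDerivAt (fun t : ℝ => f (x + t • v)) (f' v) 0 := by
    have hx : HasFDerivAt f f' (x + (0 : ℝ) • v) := by simpa using hf'
    refine hx.comp_hasDerivAt 0 ?_
    simpa using ((hasDerivAt_id (0 : ℝ)).smul_const v).const_add x
  refine ge_of_tendsto hline.tendsto_slope.norm ?_
  filter_upwards [self_mem_nhdsWithin] with t (ht : t ≠ 0)
  have hquot := hf (x + t • v) x
  rw [add_sub_cancel_left, norm_smul, Real.norm_eq_abs] at hquot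
  rw [slope_def_module, sub_zero, zero_smul, add_zero, norm_smul, norm_inv, Real.norm_eq_abs,
    le_inv_mul_iff₀ (abs_pos.mpr ht)]
  linarith

end Derivative

section Adjoint

variable {E F : Type*} [NormedAddCommGroup E] [InnerProductSpace ℝ E] [CompleteSpace E]
  [NormedAddCommGroup F] [InnerProductSpace ℝ F] [CompleteSpace F]

theorem HasFDerivAt.hasGradientAt_half_norm_sq_add_const {f : E → F} {f' : E →L[ℝ] F} {x : E}
    (hf : HasFDerivAt f f' x) (c : ℝ) :
    HasGradientAt (fun y => (1 / 2 : ℝ) * ‖f y‖ ^ 2 + c) (f'.adjoint (f x)) x := by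
  rw [hasGradientAt_iff_hasFDerivAt]
  refine ((hf.norm_sq.const_mul (1 / 2 : ℝ)).add_const c).congr_fderiv ?_
  ext v
  simp [ContinuousLinearMap.adjoint_inner_left]

theorem ContinuousLinearMap.mul_norm_le_norm_adjoint_apply {A : E →L[ℝ] F} {μ : ℝ}
    (hA : Function.Surjective A) (hbound : ∀ v, μ * ‖v‖ ≤ ‖A v‖) (w : F) :
    μ * ‖w‖ ≤ ‖A.adjoint w‖ := by
  obtain ⟨v, rfl⟩ := hA w
  set w' := A.adjoint (A v)
  have hinner : ‖A v‖ ^ 2 ≤ ‖w'‖ * ‖v‖ := by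
    rw [← real_inner_self_eq_norm_sq, ← ContinuousLinearMap.adjoint_inner_left]
    exact real_inner_le_norm _ _
  rcases le_or_gt μ 0 with hμ | hμ
  · exact (mul_nonpos_of_nonpos_of_nonneg hμ (norm_nonneg _)).trans (norm_nonneg _)
  rcases (norm_nonneg (A v)).eq_or_lt with h0 | hpos
  · rw [← h0, mul_zero]
    exact norm_nonneg _
  refine le_of_mul_le_mul_right ?_ hpos
  calc μ * ‖A v‖ * ‖A v‖ = μ * ‖A v‖ ^ 2 := by ring
    _ ≤ μ * (‖w'‖ * ‖v‖) := mul_le_mul_of_nonneg_left hinner hμ.le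
    _ = ‖w'‖ * (μ * ‖v‖) := by ring
    _ ≤ ‖w'‖ * ‖A v‖ := mul_le_mul_of_nonneg_left (hbound v) (norm_nonneg _)

end Adjoint

theorem ContinuousLinearMap.surjective_of_forall_mul_norm_le_norm_apply {E : Type*}
    [NormedAddCommGroup E] [NormedSpace ℝ E] [FiniteDimensional ℝ E] {A : E →L[ℝ] E} {μ : ℝ}
    (hμ : 0 < μ) (hbound : ∀ v, μ * ‖v‖ ≤ ‖A v‖) : Function.Surjective A := by
  refine LinearMap.injective_iff_surjective (f := (A : E →ₗ[ℝ] E)) |>.mp ?_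
  refine (injective_iff_map_eq_zero A).mpr fun v hv => ?_
  have := hbound v
  rw [hv, norm_zero] at this
  exact norm_le_zero_iff.mp (nonpos_of_mul_nonpos_right this hμ)

theorem mul_norm_le_norm_gradient_half_norm_sq_add_const {E : Type*} [NormedAddCommGroup E]
    [InnerProductSpace ℝ E] [FiniteDimensional ℝ E] {f : E → E} {μ : ℝ} (hμ : 0 < μ)
    (hf : ∀ a b, μ * ‖a - b‖ ≤ ‖f a - f b‖) (c : ℝ) {x : E} (hx : DifferentiableAt ℝ f x) :
    μ * ‖f x‖ ≤ ‖gradient (fun y => (1 / 2 : ℝ) * ‖f y‖ ^ 2 + c) x‖ := by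
  have hbound := hx.hasFDerivAt.mul_norm_le_norm_apply_of_forall_mul_norm_sub_le hf
  rw [(hx.hasFDerivAt.hasGradientAt_half_norm_sq_add_const c).gradient]
  exact ContinuousLinearMap.mul_norm_le_norm_adjoint_apply
    (ContinuousLinearMap.surjective_of_forall_mul_norm_le_norm_apply hμ hbound) hbound _

theorem stmt_1_general (n : ℕ) (μ c : ℝ) (hμ : 0 < μ)
    (G : EuclideanSpace ℝ (Fin n) → EuclideanSpace ℝ (Fin n))
    (hinv : ∀ xa xb, μ * ‖xa - xb‖ ≤ ‖G xa - G xb‖)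
    (H : EuclideanSpace ℝ (Fin n) → ℝ)
    (hH : H = fun x => (1 / 2 : ℝ) * ‖G x‖ ^ 2 + c)
    (x₀ : EuclideanSpace ℝ (Fin n)) :
    ∀ x, DifferentiableAt ℝ G x →
      (1 / 2 : ℝ) * ‖gradient H x‖ ^ 2 ≥ μ ^ 2 * (H x - H x₀) := by
  subst hH
  intro x hx
  have hgrad := mul_norm_le_norm_gradient_half_norm_sq_add_const hμ hinv c hx
  have hsq : (μ * ‖G x‖) ^ 2 ≤ ‖gradient (fun y => (1 / 2 : ℝ) * ‖G y‖ ^ 2 + c) x‖ ^ 2 :=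
    pow_le_pow_left₀ (by positivity) hgrad 2
  nlinarith [sq_nonneg ‖G x₀‖, sq_nonneg μ]

theorem stmt_1 (n : ℕ) (μ c : ℝ) (hμ : 0 < μ)
    (G : EuclideanSpace ℝ (Fin n) → EuclideanSpace ℝ (Fin n))
    (hinv : ∀ xa xb, μ * ‖xa - xb‖ ≤ ‖G xa - G xb‖)
    (H : EuclideanSpace ℝ (Fin n) → ℝ)
    (hH : H = fun x => (1 / 2 : ℝ) * ‖G x‖ ^ 2 + c)
    (x₀ : EuclideanSpace ℝ (Fin n)) (hmin : ∀ y, H x₀ ≤ H y) :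
    ∀ x, DifferentiableAt ℝ G x →
      (1 / 2 : ℝ) * ‖gradient H x‖ ^ 2 ≥ μ ^ 2 * (H x - H x₀) :=
  stmt_1_general n μ c hμ G hinv H hH x₀
end

section
/- Let H₁ : ℝ^n → ℝ and H₂ : ℝ^m → ℝ be C¹, C₁ : ℝ^n → ℝ^p, C₂ : ℝ^m → ℝ^p be C¹, and suppose x₁(t), x₂(t) solve ẋ₁ = (J₁(x₁) - R₁(x₁))(∇H₁(x₁) - (DC₁(x₁))ᵀ C₂(x₂)) and ẋ₂ = (J₂(x₂) - R₂(x₂))(∇H₂(x₂) - (DC₂(x₂))ᵀ C₁(x₁)), with J_i skew-symmetric and R_i symmetric positive semidefinite at every point. Then W(x₁,x₂) = H₁(x₁) + H₂(x₂) - C₁(x₁)ᵀC₂(x₂) satisfies d/dt W(x₁(t),x₂(t)) ≤ 0. -/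
/-!
Along the coupled flow, the chain rule and the adjoint identity `⟪DC₁ u, C₂⟫ = ⟪(DC₁)† C₂, u⟫`
turn the derivative of `W = H₁ + H₂ - ⟪C₁, C₂⟫` into `⟪v₁, (J₁ - R₁) v₁⟫ + ⟪v₂, (J₂ - R₂) v₂⟫`,
where `vᵢ` is the effort vector the dynamics is driven by. Skew-symmetry kills the `Jᵢ` terms and
what is left, `-⟪v₁, R₁ v₁⟫ - ⟪v₂, R₂ v₂⟫`, is nonpositive.
-/

open ContinuousLinearMap
open scoped RealInnerProductSpace

section Dissipation

variable {E : Type*} [NormedAddCommGroup E] [InnerProductSpace ℝ E] [CompleteSpace E]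

theorem ContinuousLinearMap.inner_apply_self_eq_zero_of_adjoint_eq_neg {J : E →L[ℝ] E}
    (hJ : adjoint J = -J) (v : E) : ⟪v, J v⟫ = 0 := by
  have h : ⟪v, J v⟫ = -⟪v, J v⟫ :=
    calc ⟪v, J v⟫ = ⟪adjoint J v, v⟫ := by rw [adjoint_inner_left, real_inner_comm]
      _ = -⟪v, J v⟫ := by rw [hJ, neg_apply, inner_neg_left, real_inner_comm]
  linarith

theorem ContinuousLinearMap.inner_sub_apply_self_nonpos {J R : E →L[ℝ] E}
    (hJ : adjoint J = -J) (hR : ∀ v, 0 ≤ ⟪v, R v⟫) (v : E) :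
    ⟪v, (J - R) v⟫ ≤ 0 := by
  rw [sub_apply, inner_sub_right, inner_apply_self_eq_zero_of_adjoint_eq_neg hJ, zero_sub,
    neg_nonpos]
  exact hR v

end Dissipation

section CoupledEnergy

variable {E₁ E₂ F : Type*}
  [NormedAddCommGroup E₁] [InnerProductSpace ℝ E₁] [CompleteSpace E₁]
  [NormedAddCommGroup E₂] [InnerProductSpace ℝ E₂] [CompleteSpace E₂]
  [NormedAddCommGroup F] [InnerProductSpace ℝ F] [CompleteSpace F]

theorem HasGradientAt.comp_hasDerivAt {H : E₁ → ℝ} {g : E₁} {x : ℝ → E₁} {u : E₁} {t : ℝ}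
    (hH : HasGradientAt H g (x t)) (hx : HasDerivAt x u t) :
    HasDerivAt (fun s => H (x s)) ⟪g, u⟫ t := by
  have h := hH.hasFDerivAt.comp_hasDerivAt t hx
  rwa [InnerProductSpace.toDual_apply_apply] at h

theorem hasDerivAt_coupledEnergy {H₁ : E₁ → ℝ} {H₂ : E₂ → ℝ} {C₁ : E₁ → F} {C₂ : E₂ → F}
    {x₁ : ℝ → E₁} {x₂ : ℝ → E₂} {u₁ : E₁} {u₂ : E₂} {t : ℝ}
    (hH₁ : DifferentiableAt ℝ H₁ (x₁ t)) (hH₂ : DifferentiableAt ℝ H₂ (x₂ t))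
    (hC₁ : DifferentiableAt ℝ C₁ (x₁ t)) (hC₂ : DifferentiableAt ℝ C₂ (x₂ t))
    (hx₁ : HasDerivAt x₁ u₁ t) (hx₂ : HasDerivAt x₂ u₂ t) :
    HasDerivAt (fun s => H₁ (x₁ s) + H₂ (x₂ s) - ⟪C₁ (x₁ s), C₂ (x₂ s)⟫)
      (⟪gradient H₁ (x₁ t) - adjoint (fderiv ℝ C₁ (x₁ t)) (C₂ (x₂ t)), u₁⟫ +
        ⟪gradient H₂ (x₂ t) - adjoint (fderiv ℝ C₂ (x₂ t)) (C₁ (x₁ t)), u₂⟫) t := by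
  have hW := ((hH₁.hasGradientAt.comp_hasDerivAt hx₁).add
    (hH₂.hasGradientAt.comp_hasDerivAt hx₂)).sub
    ((hC₁.hasFDerivAt.comp_hasDerivAt t hx₁).inner ℝ (hC₂.hasFDerivAt.comp_hasDerivAt t hx₂))
  refine hW.congr_deriv ?_
  rw [inner_sub_left, inner_sub_left, adjoint_inner_left, adjoint_inner_left, Function.comp_apply,
    Function.comp_apply, real_inner_comm (C₂ (x₂ t))]
  ring

end CoupledEnergy

theorem stmt_12_general (n m p : ℕ)
    (J₁ R₁ : EuclideanSpace ℝ (Fin n) →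
      EuclideanSpace ℝ (Fin n) →L[ℝ] EuclideanSpace ℝ (Fin n))
    (J₂ R₂ : EuclideanSpace ℝ (Fin m) →
      EuclideanSpace ℝ (Fin m) →L[ℝ] EuclideanSpace ℝ (Fin m))
    (hJ₁ : ∀ x, ContinuousLinearMap.adjoint (J₁ x) = -(J₁ x))
    (hR₁psd : ∀ x v, 0 ≤ (inner ℝ v (R₁ x v) : ℝ))
    (hJ₂ : ∀ x, ContinuousLinearMap.adjoint (J₂ x) = -(J₂ x))
    (hR₂psd : ∀ x v, 0 ≤ (inner ℝ v (R₂ x v) : ℝ))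
    (H₁ : EuclideanSpace ℝ (Fin n) → ℝ) (hH₁ : ContDiff ℝ 1 H₁)
    (H₂ : EuclideanSpace ℝ (Fin m) → ℝ) (hH₂ : ContDiff ℝ 1 H₂)
    (C₁ : EuclideanSpace ℝ (Fin n) → EuclideanSpace ℝ (Fin p))
    (hC₁ : ContDiff ℝ 1 C₁)
    (C₂ : EuclideanSpace ℝ (Fin m) → EuclideanSpace ℝ (Fin p))
    (hC₂ : ContDiff ℝ 1 C₂)
    (x₁ : ℝ → EuclideanSpace ℝ (Fin n)) (x₂ : ℝ → EuclideanSpace ℝ (Fin m))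
    (hode₁ : ∀ t, HasDerivAt x₁
      ((J₁ (x₁ t) - R₁ (x₁ t))
        (gradient H₁ (x₁ t) -
          ContinuousLinearMap.adjoint (fderiv ℝ C₁ (x₁ t)) (C₂ (x₂ t)))) t)
    (hode₂ : ∀ t, HasDerivAt x₂
      ((J₂ (x₂ t) - R₂ (x₂ t))
        (gradient H₂ (x₂ t) -
          ContinuousLinearMap.adjoint (fderiv ℝ C₂ (x₂ t)) (C₁ (x₁ t)))) t) :
    ∀ t, deriv (fun s =>
      H₁ (x₁ s) + H₂ (x₂ s) - (inner ℝ (C₁ (x₁ s)) (C₂ (x₂ s)) : ℝ)) t ≤ 0 := by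
  intro t
  have hW := hasDerivAt_coupledEnergy (hH₁.differentiable one_ne_zero _)
    (hH₂.differentiable one_ne_zero _) (hC₁.differentiable one_ne_zero _)
    (hC₂.differentiable one_ne_zero _) (hode₁ t) (hode₂ t)
  rw [hW.deriv]
  exact add_nonpos (inner_sub_apply_self_nonpos (hJ₁ _) (hR₁psd _) _)
    (inner_sub_apply_self_nonpos (hJ₂ _) (hR₂psd _) _)

theorem stmt_12 (n m p : ℕ)
    (J₁ R₁ : EuclideanSpace ℝ (Fin n) →
      EuclideanSpace ℝ (Fin n) →L[ℝ] EuclideanSpace ℝ (Fin n))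
    (J₂ R₂ : EuclideanSpace ℝ (Fin m) →
      EuclideanSpace ℝ (Fin m) →L[ℝ] EuclideanSpace ℝ (Fin m))
    (hJ₁ : ∀ x, ContinuousLinearMap.adjoint (J₁ x) = -(J₁ x))
    (hR₁sym : ∀ x, ContinuousLinearMap.adjoint (R₁ x) = R₁ x)
    (hR₁psd : ∀ x v, 0 ≤ (inner ℝ v (R₁ x v) : ℝ))
    (hJ₂ : ∀ x, ContinuousLinearMap.adjoint (J₂ x) = -(J₂ x))
    (hR₂sym : ∀ x, ContinuousLinearMap.adjoint (R₂ x) = R₂ x)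
    (hR₂psd : ∀ x v, 0 ≤ (inner ℝ v (R₂ x v) : ℝ))
    (H₁ : EuclideanSpace ℝ (Fin n) → ℝ) (hH₁ : ContDiff ℝ 1 H₁)
    (H₂ : EuclideanSpace ℝ (Fin m) → ℝ) (hH₂ : ContDiff ℝ 1 H₂)
    (C₁ : EuclideanSpace ℝ (Fin n) → EuclideanSpace ℝ (Fin p))
    (hC₁ : ContDiff ℝ 1 C₁)
    (C₂ : EuclideanSpace ℝ (Fin m) → EuclideanSpace ℝ (Fin p))
    (hC₂ : ContDiff ℝ 1 C₂)
    (x₁ : ℝ → EuclideanSpace ℝ (Fin n)) (x₂ : ℝ → EuclideanSpace ℝ (Fin m))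
    (hode₁ : ∀ t, HasDerivAt x₁
      ((J₁ (x₁ t) - R₁ (x₁ t))
        (gradient H₁ (x₁ t) -
          ContinuousLinearMap.adjoint (fderiv ℝ C₁ (x₁ t)) (C₂ (x₂ t)))) t)
    (hode₂ : ∀ t, HasDerivAt x₂
      ((J₂ (x₂ t) - R₂ (x₂ t))
        (gradient H₂ (x₂ t) -
          ContinuousLinearMap.adjoint (fderiv ℝ C₂ (x₂ t)) (C₁ (x₁ t)))) t) :
    ∀ t, deriv (fun s =>
      H₁ (x₁ s) + H₂ (x₂ s) - (inner ℝ (C₁ (x₁ s)) (C₂ (x₂ s)) : ℝ)) t ≤ 0 :=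
  stmt_12_general n m p J₁ R₁ J₂ R₂ hJ₁ hR₁psd hJ₂ hR₂psd H₁ hH₁ H₂ hH₂ C₁ hC₁ C₂ hC₂ x₁ x₂ hode₁
    hode₂
end

section
/- Let V(q) ≥ (η/2)|q|² for all q ∈ ℝ^n with V(0)=0, let M(q) be symmetric positive definite for all q, let H₂(x₂) ≥ (γ²/2)|x₂|², and let |C₂(x₂)| ≤ μ̄|x₂| where 0 < μ̄ < √η γ. Then W(q, p, x₂) = V(q) + (1/2)pᵀM(q)⁻¹p + H₂(x₂) - qᵀC₂(x₂) is positive definite in (q, p, x₂): W(0,0,0) = 0 and W > 0 elsewhere. -/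
/-!
Write `a = ‖q‖`, `b = ‖x₂‖`. By Cauchy–Schwarz the cross term is at most `μ a b`, and since
`μ < √η γ` while `√η γ a b ≤ (η/2) a² + (γ²/2) b²` (AM–GM), the potential part
`V q + H₂ x₂ - qᵀC₂(x₂)` is positive unless `q = x₂ = 0`. The kinetic term `½ pᵀM(q)⁻¹p` is
nonnegative, and positive for `p ≠ 0`, because `M(q)⁻¹` is positive definite.
-/

open Matrix

lemma mul_mul_lt_half_mul_sq_add_half_mul_sq {η γ μ a b : ℝ} (hη : 0 < η) (hγ : 0 < γ)
    (hμ : μ < Real.sqrt η * γ) (ha : 0 ≤ a) (hb : 0 ≤ b) (hab : a ≠ 0 ∨ b ≠ 0) :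
    μ * a * b < η / 2 * a ^ 2 + γ ^ 2 / 2 * b ^ 2 := by
  have hamgm : Real.sqrt η * γ * a * b ≤ η / 2 * a ^ 2 + γ ^ 2 / 2 * b ^ 2 := by
    nlinarith [sq_nonneg (Real.sqrt η * a - γ * b), Real.sq_sqrt hη.le]
  rcases (mul_nonneg ha hb).lt_or_eq with hpos | hzero
  · calc μ * a * b = μ * (a * b) := mul_assoc _ _ _
      _ < Real.sqrt η * γ * (a * b) := mul_lt_mul_of_pos_right hμ hpos
      _ ≤ _ := by rw [← mul_assoc]; exact hamgm
  · rw [mul_assoc, ← hzero, mul_zero]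
    rcases hab with ha0 | hb0
    · have : 0 < a ^ 2 := by positivity
      positivity
    · have : 0 < b ^ 2 := by positivity
      positivity

lemma sub_inner_pos_of_lower_bounds {E F : Type*} [NormedAddCommGroup E]
    [InnerProductSpace ℝ E] [NormedAddCommGroup F] {η γ μ : ℝ} (hη : 0 < η) (hγ : 0 < γ)
    (hcond : μ < Real.sqrt η * γ) {V : E → ℝ} {H : F → ℝ} {C : F → E}
    (hV : ∀ q, η / 2 * ‖q‖ ^ 2 ≤ V q) (hH : ∀ x, γ ^ 2 / 2 * ‖x‖ ^ 2 ≤ H x)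
    (hC : ∀ x, ‖C x‖ ≤ μ * ‖x‖) {q : E} {x : F} (hqx : q ≠ 0 ∨ x ≠ 0) :
    0 < V q + H x - inner ℝ q (C x) := by
  have hcross : inner ℝ q (C x) ≤ μ * ‖q‖ * ‖x‖ :=
    calc inner ℝ q (C x) ≤ ‖q‖ * ‖C x‖ := real_inner_le_norm _ _
      _ ≤ ‖q‖ * (μ * ‖x‖) := mul_le_mul_of_nonneg_left (hC x) (norm_nonneg q)
      _ = μ * ‖q‖ * ‖x‖ := by ring
  have hquad := mul_mul_lt_half_mul_sq_add_half_mul_sq hη hγ hcond (norm_nonneg q)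
    (norm_nonneg x) (by simpa only [ne_eq, norm_eq_zero] using hqx)
  linarith [hV q, hH x]

lemma Matrix.PosDef.dotProduct_inv_mulVec_nonneg {n : Type*} [Fintype n] [DecidableEq n]
    {A : Matrix n n ℝ} (hA : A.PosDef) (v : n → ℝ) : 0 ≤ v ⬝ᵥ (A⁻¹ *ᵥ v) := by
  simpa only [star_trivial] using hA.inv.posSemidef.dotProduct_mulVec_nonneg v

lemma Matrix.PosDef.dotProduct_inv_mulVec_pos {n : Type*} [Fintype n] [DecidableEq n]
    {A : Matrix n n ℝ} (hA : A.PosDef) {v : n → ℝ} (hv : v ≠ 0) : 0 < v ⬝ᵥ (A⁻¹ *ᵥ v) := by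
  simpa only [star_trivial] using hA.inv.dotProduct_mulVec_pos hv

theorem stmt_13_general (n m : ℕ) (η γ μ : ℝ) (hη : 0 < η) (hγ : 0 < γ)
    (hcond : μ < Real.sqrt η * γ)
    (V : EuclideanSpace ℝ (Fin n) → ℝ) (hV0 : V 0 = 0)
    (hVlb : ∀ q, V q ≥ (η / 2) * ‖q‖ ^ 2)
    (M : EuclideanSpace ℝ (Fin n) → Matrix (Fin n) (Fin n) ℝ)
    (hM : ∀ q, (M q).PosDef)
    (H₂ : EuclideanSpace ℝ (Fin m) → ℝ) (hH₂0 : H₂ 0 = 0)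
    (hH₂lb : ∀ x₂, H₂ x₂ ≥ (γ ^ 2 / 2) * ‖x₂‖ ^ 2)
    (C₂ : EuclideanSpace ℝ (Fin m) → EuclideanSpace ℝ (Fin n))
    (hC₂lip : ∀ x₂, ‖C₂ x₂‖ ≤ μ * ‖x₂‖)
    (W : EuclideanSpace ℝ (Fin n) → EuclideanSpace ℝ (Fin n) →
      EuclideanSpace ℝ (Fin m) → ℝ)
    (hW : W = fun q p x₂ =>
      V q + (1 / 2 : ℝ) * ((WithLp.ofLp p : Fin n → ℝ) ⬝ᵥ ((M q)⁻¹ *ᵥ (WithLp.ofLp p : Fin n → ℝ)))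
        + H₂ x₂ - (inner ℝ q (C₂ x₂) : ℝ)) :
    W 0 0 0 = 0 ∧ ∀ q p x₂, (q, p, x₂) ≠ (0, 0, 0) → 0 < W q p x₂ := by
  subst hW
  refine ⟨by simp [hV0, hH₂0], fun q p x₂ hne => ?_⟩
  have hkin := (hM q).dotProduct_inv_mulVec_nonneg (WithLp.ofLp p)
  by_cases hqx : q = 0 ∧ x₂ = 0
  · obtain ⟨rfl, rfl⟩ := hqx
    have hp : WithLp.ofLp p ≠ 0 := by
      rintro hp
      exact hne (by rw [(WithLp.ofLp_injective 2).eq_iff.mp hp]; rfl)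
    have := (hM 0).dotProduct_inv_mulVec_pos hp
    simp only [hV0, hH₂0, inner_zero_left]
    linarith
  · have hpot := sub_inner_pos_of_lower_bounds hη hγ hcond hVlb hH₂lb hC₂lip
      (not_and_or.mp hqx)
    dsimp only
    linarith

theorem stmt_13 (n m : ℕ) (η γ μ : ℝ) (hη : 0 < η) (hγ : 0 < γ)
    (hμ : 0 < μ) (hcond : μ < Real.sqrt η * γ)
    (V : EuclideanSpace ℝ (Fin n) → ℝ) (hV0 : V 0 = 0)
    (hVlb : ∀ q, V q ≥ (η / 2) * ‖q‖ ^ 2)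
    (M : EuclideanSpace ℝ (Fin n) → Matrix (Fin n) (Fin n) ℝ)
    (hM : ∀ q, (M q).PosDef)
    (H₂ : EuclideanSpace ℝ (Fin m) → ℝ) (hH₂0 : H₂ 0 = 0)
    (hH₂lb : ∀ x₂, H₂ x₂ ≥ (γ ^ 2 / 2) * ‖x₂‖ ^ 2)
    (C₂ : EuclideanSpace ℝ (Fin m) → EuclideanSpace ℝ (Fin n))
    (hC₂0 : C₂ 0 = 0) (hC₂lip : ∀ x₂, ‖C₂ x₂‖ ≤ μ * ‖x₂‖)
    (W : EuclideanSpace ℝ (Fin n) → EuclideanSpace ℝ (Fin n) →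
      EuclideanSpace ℝ (Fin m) → ℝ)
    (hW : W = fun q p x₂ =>
      V q + (1 / 2 : ℝ) * ((WithLp.ofLp p : Fin n → ℝ) ⬝ᵥ ((M q)⁻¹ *ᵥ (WithLp.ofLp p : Fin n → ℝ)))
        + H₂ x₂ - (inner ℝ q (C₂ x₂) : ℝ)) :
    W 0 0 0 = 0 ∧ ∀ q p x₂, (q, p, x₂) ≠ (0, 0, 0) → 0 < W q p x₂ :=
  stmt_13_general n m η γ μ hη hγ hcond V hV0 hVlb M hM H₂ hH₂0 hH₂lb C₂ hC₂lip W hW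
end

section
/- For a linear time-invariant system ẋ = (J - R)(Px - Cᵀu), y = Cx, with J skew-symmetric, R symmetric positive semidefinite, P symmetric positive definite, and C ∈ ℝ^{p×n}, the storage function V(x) = (1/2)xᵀPx satisfies V̇ ≤ uᵀẏ along all trajectories; i.e., the system is negative imaginary. -/
/-!
Since `V` is quadratic with symmetric `P`, its gradient is `P x`, so along a trajectory
`V̇ - uᵀẏ = (P x - Cᵀ u)ᵀ ẋ = vᵀ (J - R) v` with `v = P x - Cᵀ u`. The skew part `J` contributes
nothing and `R ⪰ 0` makes the rest nonpositive.
-/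

open Matrix

section Derivatives

variable {ι κ : Type*} [Fintype ι] {x : ℝ → ι → ℝ} {x' : ι → ℝ} {t : ℝ}

theorem HasDerivAt.mulVec (M : Matrix κ ι ℝ) (hx : HasDerivAt x x' t) :
    HasDerivAt (fun s => M *ᵥ x s) (M *ᵥ x') t := by
  rw [hasDerivAt_pi] at hx ⊢
  intro i
  exact HasDerivAt.fun_sum fun j _ => (hx j).const_mul (M i j)

theorem HasDerivAt.dotProduct {y : ℝ → ι → ℝ} {y' : ι → ℝ}
    (hx : HasDerivAt x x' t) (hy : HasDerivAt y y' t) :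
    HasDerivAt (fun s => x s ⬝ᵥ y s) (x' ⬝ᵥ y t + x t ⬝ᵥ y') t := by
  rw [hasDerivAt_pi] at hx hy
  simp only [_root_.dotProduct, ← Finset.sum_add_distrib]
  exact HasDerivAt.fun_sum fun j _ => (hx j).mul (hy j)

theorem HasDerivAt.half_dotProduct_mulVec_self {P : Matrix ι ι ℝ} (hP : P.IsSymm)
    (hx : HasDerivAt x x' t) :
    HasDerivAt (fun s => (1 / 2 : ℝ) * (x s ⬝ᵥ (P *ᵥ x s))) ((P *ᵥ x t) ⬝ᵥ x') t := by
  refine ((hx.dotProduct (hx.mulVec P)).const_mul (1 / 2 : ℝ)).congr_deriv ?_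
  rw [dotProduct_mulVec (x t) P x', ← mulVec_transpose, hP.eq, dotProduct_comm x']
  ring

end Derivatives

theorem Matrix.dotProduct_mulVec_self_eq_zero_of_transpose_eq_neg {ι α : Type*} [Fintype ι]
    [CommRing α] [NoZeroDivisors α] [CharZero α] {J : Matrix ι ι α} (hJ : Jᵀ = -J)
    (v : ι → α) : v ⬝ᵥ (J *ᵥ v) = 0 := by
  refine CharZero.eq_neg_self_iff.mp ?_
  conv_lhs => rw [dotProduct_mulVec, ← mulVec_transpose, hJ, neg_mulVec, neg_dotProduct,
    dotProduct_comm]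

theorem Matrix.dotProduct_sub_mulVec_self_nonpos {ι : Type*} [Fintype ι]
    {J R : Matrix ι ι ℝ} (hJ : Jᵀ = -J) (hR : R.PosSemidef) (v : ι → ℝ) :
    v ⬝ᵥ ((J - R) *ᵥ v) ≤ 0 := by
  rw [sub_mulVec, dotProduct_sub, dotProduct_mulVec_self_eq_zero_of_transpose_eq_neg hJ, zero_sub,
    neg_nonpos]
  simpa using hR.dotProduct_mulVec_nonneg v

theorem stmt_17 (n p : ℕ)
    (J R P : Matrix (Fin n) (Fin n) ℝ) (C : Matrix (Fin p) (Fin n) ℝ)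
    (hJ : Jᵀ = -J) (hR : R.PosSemidef) (hP : P.PosDef)
    (x : ℝ → Fin n → ℝ) (u : ℝ → Fin p → ℝ)
    (hode : ∀ t, HasDerivAt x ((J - R) *ᵥ (P *ᵥ x t - Cᵀ *ᵥ u t)) t) :
    ∀ t, deriv (fun s => (1 / 2 : ℝ) * (x s ⬝ᵥ (P *ᵥ x s))) t ≤
      u t ⬝ᵥ deriv (fun s => C *ᵥ x s) t := by
  intro t
  set v := P *ᵥ x t - Cᵀ *ᵥ u t
  have hP_symm : P.IsSymm := isHermitian_iff_isSymm.mp hP.isHermitian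
  rw [((hode t).half_dotProduct_mulVec_self hP_symm).deriv, ((hode t).mulVec C).deriv]
  have hdiss := dotProduct_sub_mulVec_self_nonpos hJ hR v
  calc (P *ᵥ x t) ⬝ᵥ ((J - R) *ᵥ v)
      = (Cᵀ *ᵥ u t) ⬝ᵥ ((J - R) *ᵥ v) + v ⬝ᵥ ((J - R) *ᵥ v) := by
        rw [sub_dotProduct]; ring
    _ ≤ (Cᵀ *ᵥ u t) ⬝ᵥ ((J - R) *ᵥ v) := by linarith
    _ = u t ⬝ᵥ (C *ᵥ ((J - R) *ᵥ v)) := by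
        rw [mulVec_transpose]; exact (dotProduct_mulVec _ _ _).symm
end
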